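/- Let f : ℝ^n → ℝ be differentiable with L-Lipschitz gradient (L > 0), finite infimum f* = inf_x f(x), and satisfying the Polyak–Łojasiewicz condition with constant μ where 0 < μ ≤ L. Define the gradient-descent iterates x_{k+1} = x_k − (1/L) ∇f(x_k) from any initial point x_0. Then for every K ≥ 0, f(x_K) − f* ≤ (1 − μ/L)^K (f(x_0) − f*); in particular f(x_K) → f* as K → ∞. -/

import Mathlib

/-!
Since `∇f` is `L`-Lipschitz, `f` lies below the quadratic model
`f y ≤ f x + ⟪∇f x, y - x⟫ + L/2 ‖y - x‖²` (differentiate along the segment), so a step of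
length `1/L` lowers `f` by at least `‖∇f x‖² / (2L)`. The PL inequality bounds this decrease
from below by `(μ/L) (f x - f*)`, so the gap `f (x k) - f*` contracts by `1 - μ/L` at each step.
-/

open scoped Topology
open InnerProductSpace Gradient

section Descent

variable {E : Type*} [NormedAddCommGroup E] [InnerProductSpace ℝ E] [CompleteSpace E]
  {f : E → ℝ}

theorem hasDerivAt_comp_add_smul (hf : Differentiable ℝ f) (a v : E) (t : ℝ) :
    HasDerivAt (fun s : ℝ => f (a + s • v)) ⟪∇ f (a + t • v), v⟫_ℝ t := by
  have hline : HasDerivAt (fun s : ℝ => a + s • v) v t := by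
    simpa using ((hasDerivAt_id t).smul_const v).const_add a
  exact (hf _).hasGradientAt.hasFDerivAt.comp_hasDerivAt t hline

theorem le_add_inner_gradient_add_sq_of_lipschitz_gradient (hf : Differentiable ℝ f) {L : ℝ}
    (hlip : ∀ x y, ‖∇ f x - ∇ f y‖ ≤ L * ‖x - y‖) (a b : E) :
    f b ≤ f a + ⟪∇ f a, b - a⟫_ℝ + L / 2 * ‖b - a‖ ^ 2 := by
  set v := b - a
  let φ : ℝ → ℝ := fun t => f (a + t • v) - t * ⟪∇ f a, v⟫_ℝ - L / 2 * t ^ 2 * ‖v‖ ^ 2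
  have hφ' : ∀ t, HasDerivAt φ (⟪∇ f (a + t • v) - ∇ f a, v⟫_ℝ - L * t * ‖v‖ ^ 2) t := by
    intro t
    refine (((hasDerivAt_comp_add_smul hf a v t).sub
      ((hasDerivAt_id t).mul_const ⟪∇ f a, v⟫_ℝ)).sub
      (((hasDerivAt_pow 2 t).const_mul (L / 2)).mul_const (‖v‖ ^ 2))).congr_deriv ?_
    simp only [inner_sub_left]
    ring
  have hφ'_nonpos : ∀ t ∈ interior (Set.Icc (0 : ℝ) 1),
      ⟪∇ f (a + t • v) - ∇ f a, v⟫_ℝ - L * t * ‖v‖ ^ 2 ≤ 0 := by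
    intro t ht
    rw [interior_Icc] at ht
    have hgrad : ‖∇ f (a + t • v) - ∇ f a‖ ≤ L * t * ‖v‖ := by
      simpa [norm_smul, abs_of_pos ht.1, mul_assoc] using hlip (a + t • v) a
    have hinner : ⟪∇ f (a + t • v) - ∇ f a, v⟫_ℝ ≤ L * t * ‖v‖ ^ 2 :=
      calc ⟪∇ f (a + t • v) - ∇ f a, v⟫_ℝ ≤ ‖∇ f (a + t • v) - ∇ f a‖ * ‖v‖ :=
            real_inner_le_norm _ _
        _ ≤ L * t * ‖v‖ * ‖v‖ := by gcongr
        _ = L * t * ‖v‖ ^ 2 := by ring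
    linarith
  have hanti : AntitoneOn φ (Set.Icc 0 1) :=
    antitoneOn_of_hasDerivWithinAt_nonpos (convex_Icc 0 1)
      (fun t _ => (hφ' t).continuousAt.continuousWithinAt)
      (fun t _ => (hφ' t).hasDerivWithinAt) hφ'_nonpos
  have hφ01 : φ 1 ≤ φ 0 := hanti (by simp) (by simp) zero_le_one
  simp only [φ, one_smul, zero_smul, add_zero, add_sub_cancel, v] at hφ01
  linarith

theorem apply_sub_one_div_smul_gradient_le (hf : Differentiable ℝ f) {L : ℝ}
    (hlip : ∀ x y, ‖∇ f x - ∇ f y‖ ≤ L * ‖x - y‖) (a : E) :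
    f (a - (1 / L) • ∇ f a) ≤ f a - 1 / (2 * L) * ‖∇ f a‖ ^ 2 := by
  have h := le_add_inner_gradient_add_sq_of_lipschitz_gradient hf hlip a (a - (1 / L) • ∇ f a)
  rw [sub_sub_cancel_left, inner_neg_right, real_inner_smul_right, real_inner_self_eq_norm_sq,
    norm_neg, norm_smul, Real.norm_eq_abs, mul_pow, sq_abs] at h
  have hcoeff : -(1 / L) + L / 2 * (1 / L) ^ 2 = -(1 / (2 * L)) := by field_simp; ring
  linarith [congrArg (· * ‖∇ f a‖ ^ 2) hcoeff]

theorem apply_sub_one_div_smul_gradient_sub_le_of_pl (hf : Differentiable ℝ f) {L μ fstar : ℝ}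
    (hL : 0 < L) (hlip : ∀ x y, ‖∇ f x - ∇ f y‖ ≤ L * ‖x - y‖) {a : E}
    (hPL : μ * (f a - fstar) ≤ 1 / 2 * ‖∇ f a‖ ^ 2) :
    f (a - (1 / L) • ∇ f a) - fstar ≤ (1 - μ / L) * (f a - fstar) := by
  have hdecrease := apply_sub_one_div_smul_gradient_le hf hlip a
  have hPL' : μ / L * (f a - fstar) ≤ 1 / (2 * L) * ‖∇ f a‖ ^ 2 := by
    calc μ / L * (f a - fstar) = (μ * (f a - fstar)) / L := by ring
      _ ≤ (1 / 2 * ‖∇ f a‖ ^ 2) / L := by gcongr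
      _ = 1 / (2 * L) * ‖∇ f a‖ ^ 2 := by ring
  linarith

end Descent

theorem pl_gradient_descent_converges_general {n : ℕ}
    (f : EuclideanSpace ℝ (Fin n) → ℝ) (hf : Differentiable ℝ f)
    (L μ fstar : ℝ) (hμ : 0 < μ) (hμL : μ ≤ L)
    (hlip : ∀ x y, ‖gradient f x - gradient f y‖ ≤ L * ‖x - y‖)
    (hglb : IsGLB (Set.range f) fstar)
    (hPL : ∀ x, μ * (f x - fstar) ≤ (1 / 2) * ‖gradient f x‖ ^ 2)
    (x : ℕ → EuclideanSpace ℝ (Fin n))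
    (hx : ∀ k, x (k + 1) = x k - (1 / L) • gradient f (x k)) :
    (∀ K : ℕ, f (x K) - fstar ≤ (1 - μ / L) ^ K * (f (x 0) - fstar)) ∧
    Filter.Tendsto (fun K => f (x K)) Filter.atTop (𝓝 fstar) := by
  have hL : 0 < L := hμ.trans_le hμL
  have hρ : 0 ≤ 1 - μ / L := sub_nonneg.2 ((div_le_one hL).2 hμL)
  have hρ1 : 1 - μ / L < 1 := sub_lt_self 1 (div_pos hμ hL)
  have hrate : ∀ K : ℕ, f (x K) - fstar ≤ (1 - μ / L) ^ K * (f (x 0) - fstar) := fun K =>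
    le_geom (u := fun k => f (x k) - fstar) hρ K fun k _ => by
      simpa only [hx k] using apply_sub_one_div_smul_gradient_sub_le_of_pl hf hL hlip (hPL (x k))
  refine ⟨hrate, ?_⟩
  have hbound : Filter.Tendsto (fun K : ℕ => (1 - μ / L) ^ K * (f (x 0) - fstar))
      Filter.atTop (𝓝 0) := by
    simpa using (tendsto_pow_atTop_nhds_zero_of_lt_one hρ hρ1).mul_const (f (x 0) - fstar)
  have hgap := squeeze_zero (fun K => sub_nonneg.2 (hglb.1 ⟨x K, rfl⟩)) hrate hbound
  simpa using hgap.add_const fstar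

/-- **Linear convergence of gradient descent under the PL condition
(Lemma 1).** If `f : ℝ^n → ℝ` is differentiable with `L`-Lipschitz gradient
(`L > 0`), has finite infimum `fstar`, and satisfies the Polyak–Łojasiewicz
condition with constant `0 < μ ≤ L`, then the gradient descent iterates
`x (k+1) = x k - (1/L) ∇f(x k)` satisfy
`f (x K) - fstar ≤ (1 - μ/L)^K (f (x 0) - fstar)` for every `K`; in particular
`f (x K) → fstar` as `K → ∞`. -/
theorem pl_gradient_descent_converges {n : ℕ}
    (f : EuclideanSpace ℝ (Fin n) → ℝ) (hf : Differentiable ℝ f)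
    (L μ fstar : ℝ) (hL : 0 < L) (hμ : 0 < μ) (hμL : μ ≤ L)
    (hlip : ∀ x y, ‖gradient f x - gradient f y‖ ≤ L * ‖x - y‖)
    (hglb : IsGLB (Set.range f) fstar)
    (hPL : ∀ x, μ * (f x - fstar) ≤ (1 / 2) * ‖gradient f x‖ ^ 2)
    (x : ℕ → EuclideanSpace ℝ (Fin n))
    (hx : ∀ k, x (k + 1) = x k - (1 / L) • gradient f (x k)) :
    (∀ K : ℕ, f (x K) - fstar ≤ (1 - μ / L) ^ K * (f (x 0) - fstar)) ∧
    Filter.Tendsto (fun K => f (x K)) Filter.atTop (𝓝 fstar) :=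
  pl_gradient_descent_converges_general f hf L μ fstar hμ hμL hlip hglb hPL x hx
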